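/- Let f(μ₁, μᵢ) = (μ₁ − μᵢ)/D(μᵢ‖μ₁) on the domain {(μ₁, μᵢ) ∈ (0,1)² : μ₁ > μᵢ}. Then the partial derivative of f with respect to μ₁ is nonpositive everywhere on this domain. -/

import Mathlib

noncomputable def binKL (a b : ℝ) : ℝ :=
  a * Real.log (a / b) + (1 - a) * Real.log ((1 - a) / (1 - b))

/-!
By the quotient rule, with `∂D(a‖b)/∂b = (b - a) / (b (1 - b))`, the sign of the derivative is the
sign of `D(a‖b) - χ²(a‖b)`, where `χ²(a‖b) = (b - a)² / (b (1 - b))`. Writing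
`D(a‖b) = b φ(a/b) + (1 - b) φ((1-a)/(1-b))` with `φ(x) = x log x + 1 - x`, the bound
`φ(x) ≤ (x - 1)²` (from `log x ≤ x - 1`) gives `D ≤ χ²`.
-/

open Real InformationTheory

lemma klFun_le_sq_sub_one {x : ℝ} (hx : 0 ≤ x) : klFun x ≤ (x - 1) ^ 2 := by
  rcases hx.eq_or_lt with rfl | hx
  · simp [klFun_zero]
  · have := mul_le_mul_of_nonneg_left (log_le_sub_one_of_pos hx) hx.le
    rw [klFun_apply]
    nlinarith

section binKL

variable {a b : ℝ}

lemma binKL_eq_klFun (hb₀ : b ≠ 0) (hb₁ : 1 - b ≠ 0) :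
    binKL a b = b * klFun (a / b) + (1 - b) * klFun ((1 - a) / (1 - b)) := by
  simp only [binKL, klFun_apply]
  field_simp
  ring

lemma binKL_pos (ha : a ∈ Set.Icc (0 : ℝ) 1) (hb : b ∈ Set.Ioo (0 : ℝ) 1) (hab : a ≠ b) :
    0 < binKL a b := by
  obtain ⟨ha₀, ha₁⟩ := ha
  obtain ⟨hb₀, hb₁⟩ := hb
  have hb₁' : 0 < 1 - b := sub_pos.mpr hb₁
  rw [binKL_eq_klFun hb₀.ne' hb₁'.ne']
  have hfirst : 0 < klFun (a / b) := by
    refine (klFun_nonneg (by positivity)).lt_of_ne' fun h => hab ?_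
    rwa [klFun_eq_zero_iff (by positivity), div_eq_one_iff_eq hb₀.ne'] at h
  have hsecond : 0 ≤ klFun ((1 - a) / (1 - b)) := klFun_nonneg (div_nonneg (by linarith) hb₁'.le)
  positivity

lemma binKL_le_chiSq (ha : a ∈ Set.Icc (0 : ℝ) 1) (hb : b ∈ Set.Ioo (0 : ℝ) 1) :
    binKL a b ≤ (b - a) ^ 2 / (b * (1 - b)) := by
  obtain ⟨ha₀, ha₁⟩ := ha
  obtain ⟨hb₀, hb₁⟩ := hb
  have hb₁' : 0 < 1 - b := sub_pos.mpr hb₁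
  rw [binKL_eq_klFun hb₀.ne' hb₁'.ne']
  calc b * klFun (a / b) + (1 - b) * klFun ((1 - a) / (1 - b))
      ≤ b * (a / b - 1) ^ 2 + (1 - b) * ((1 - a) / (1 - b) - 1) ^ 2 := by
        gcongr
        · exact klFun_le_sq_sub_one (by positivity)
        · exact klFun_le_sq_sub_one (div_nonneg (by linarith) hb₁'.le)
    _ = (b - a) ^ 2 / (b * (1 - b)) := by
        field_simp
        ring

lemma hasDerivAt_binKL_right (ha : a ∈ Set.Ioo (0 : ℝ) 1) (hb : b ∈ Set.Ioo (0 : ℝ) 1) :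
    HasDerivAt (binKL a) ((b - a) / (b * (1 - b))) b := by
  obtain ⟨ha₀, ha₁⟩ := ha
  obtain ⟨hb₀, hb₁⟩ := hb
  have hb₁' : 0 < 1 - b := sub_pos.mpr hb₁
  have hlog₀ : HasDerivAt (fun x => log (a / x)) (-b⁻¹) b := by
    convert ((hasDerivAt_const b a).fun_div (hasDerivAt_id' b) hb₀.ne').log (by positivity) using 1
    field_simp
    ring
  have hlog₁ : HasDerivAt (fun x => log ((1 - a) / (1 - x))) (1 - b)⁻¹ b := by
    convert ((hasDerivAt_const b (1 - a)).fun_div ((hasDerivAt_id' b).const_sub 1) hb₁'.ne').log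
      (by positivity) using 1
    field_simp
    ring
  refine ((hlog₀.const_mul a).fun_add (hlog₁.const_mul (1 - a))).congr_deriv ?_
  field_simp
  ring

end binKL

/-- On the domain {(μ₁, μᵢ) ∈ (0,1)² : μ₁ > μᵢ}, the partial derivative of
f(μ₁, μᵢ) = (μ₁ − μᵢ)/D(μᵢ‖μ₁) with respect to μ₁ is nonpositive. -/
theorem deriv_f_mu1_nonpos (μ1 μi : ℝ) (h1 : μ1 ∈ Set.Ioo (0:ℝ) 1)
    (hi : μi ∈ Set.Ioo (0:ℝ) 1) (hlt : μi < μ1) :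
    deriv (fun x => (x - μi) / binKL μi x) μ1 ≤ 0 := by
  have hD := hasDerivAt_binKL_right hi h1
  have hpos := binKL_pos (Set.Ioo_subset_Icc_self hi) h1 hlt.ne
  have hchi := binKL_le_chiSq (Set.Ioo_subset_Icc_self hi) h1
  rw [(((hasDerivAt_id' μ1).sub_const μi).fun_div hD hpos.ne').deriv]
  refine div_nonpos_of_nonpos_of_nonneg ?_ (sq_nonneg _)
  rw [mul_div_assoc', ← sq]
  linarith
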